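/- arXiv:1307.0499 — 4 statements merged into one kernel-verified Lean document; each statement's English description precedes it below -/
import Mathlib

section
/- Refinement limit of the impulse-reversion construction (Proposition 'refinement limit'): fix a real number v₁ > 0 and a natural number n ≥ 1. Define, for ε > 0, the matching velocity vₙ(ε) := ε / sin(arcsin(ε/v₁)/n), corresponding to the conditions sin(α₁/2) = ε/v₁, sin(αₙ/2) = ε/vₙ(ε) and the matching condition α₁ = n·αₙ. Then vₙ(ε) tends to n·v₁ as ε tends to 0 from the right. Hence in the refinement limit the physical model reproduces the elastic collision between a composite of n unit objects with velocity v₁ and a unit object with opposite velocity n·v₁. -/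
open Filter Topology

lemma slope_tendsto_sin : Tendsto (fun x : ℝ => x / Real.sin x) (𝓝[>] (0:ℝ)) (𝓝 1) := by
  have h : Tendsto (fun x : ℝ => Real.sin x / x) (𝓝[≠] (0:ℝ)) (𝓝 1) := by
    have := (hasDerivAt_iff_tendsto_slope).1 (Real.hasDerivAt_sin 0)
    rw [Real.cos_zero] at this
    exact this.congr (fun y => by simp [slope_def_field])
  have h2 : Tendsto (fun x : ℝ => Real.sin x / x) (𝓝[>] (0:ℝ)) (𝓝 1) :=
    h.mono_left (nhdsWithin_mono _ (fun x hx => ne_of_gt hx))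
  have := h2.inv₀ one_ne_zero
  simpa [one_div] using this

lemma slope_tendsto_arcsin : Tendsto (fun x : ℝ => x / Real.arcsin x) (𝓝[>] (0:ℝ)) (𝓝 1) := by
  have h : Tendsto (fun x : ℝ => Real.arcsin x / x) (𝓝[≠] (0:ℝ)) (𝓝 1) := by
    have := (hasDerivAt_iff_tendsto_slope).1
      (Real.hasDerivAt_arcsin (x := 0) (by norm_num) (by norm_num))
    simp only [ne_eq, OfNat.ofNat_ne_zero, not_false_eq_true, zero_pow, sub_zero,
      Real.sqrt_one, one_div, inv_one] at this
    exact this.congr (fun y => by simp [slope_def_field])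
  have h2 : Tendsto (fun x : ℝ => Real.arcsin x / x) (𝓝[>] (0:ℝ)) (𝓝 1) :=
    h.mono_left (nhdsWithin_mono _ (fun x hx => ne_of_gt hx))
  have := h2.inv₀ one_ne_zero
  simpa [one_div] using this

/-- Refinement limit of the impulse-reversion construction: the matching velocity
`vₙ(ε) = ε / sin (arcsin (ε/v₁) / n)` tends to `n·v₁` as `ε → 0⁺`. -/
theorem refinement_limit_matching_velocity (v₁ : ℝ) (hv : 0 < v₁) (n : ℕ) (hn : 1 ≤ n) :
    Tendsto (fun ε : ℝ => ε / Real.sin (Real.arcsin (ε / v₁) / n))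
      (nhdsWithin 0 (Set.Ioi 0)) (nhds ((n : ℝ) * v₁)) := by
  have hn' : (0:ℝ) < n := by exact_mod_cast hn
  have hn1 : (1:ℝ) ≤ n := by exact_mod_cast hn
  have hdiv : Tendsto (fun ε : ℝ => ε / v₁) (𝓝[>] (0:ℝ)) (𝓝[>] (0:ℝ)) := by
    apply tendsto_nhdsWithin_of_tendsto_nhds_of_eventually_within
    · have h0 : Tendsto (fun ε : ℝ => ε / v₁) (𝓝 (0:ℝ)) (𝓝 ((0:ℝ) / v₁)) :=
        tendsto_id.div_const v₁
      simpa using h0.mono_left nhdsWithin_le_nhds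
    · filter_upwards [self_mem_nhdsWithin] with x hx
      exact div_pos hx hv
  have harcsin0 : Tendsto Real.arcsin (𝓝[>] (0:ℝ)) (𝓝[>] (0:ℝ)) := by
    apply tendsto_nhdsWithin_of_tendsto_nhds_of_eventually_within
    · simpa using (Real.continuous_arcsin.tendsto 0).mono_left nhdsWithin_le_nhds
    · filter_upwards [self_mem_nhdsWithin] with x hx
      exact Real.arcsin_pos.2 hx
  have harcsin : Tendsto (fun ε : ℝ => Real.arcsin (ε / v₁)) (𝓝[>] (0:ℝ)) (𝓝[>] (0:ℝ)) :=
    harcsin0.comp hdiv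
  have hθ : Tendsto (fun ε : ℝ => Real.arcsin (ε / v₁) / n) (𝓝[>] (0:ℝ)) (𝓝[>] (0:ℝ)) := by
    apply tendsto_nhdsWithin_of_tendsto_nhds_of_eventually_within
    · simpa using ((harcsin.mono_right nhdsWithin_le_nhds).div_const (n:ℝ))
    · filter_upwards [harcsin self_mem_nhdsWithin] with x hx
      exact div_pos hx hn'
  -- factorized limit
  have h1 : Tendsto (fun ε : ℝ => (ε / v₁) / Real.arcsin (ε / v₁)) (𝓝[>] (0:ℝ)) (𝓝 1) :=
    slope_tendsto_arcsin.comp hdiv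
  have h2 : Tendsto (fun ε : ℝ =>
      (Real.arcsin (ε / v₁) / n) / Real.sin (Real.arcsin (ε / v₁) / n)) (𝓝[>] (0:ℝ)) (𝓝 1) :=
    slope_tendsto_sin.comp hθ
  have hF : Tendsto (fun ε : ℝ =>
      ((ε / v₁) / Real.arcsin (ε / v₁)) *
        ((Real.arcsin (ε / v₁) / n) / Real.sin (Real.arcsin (ε / v₁) / n)) * ((n:ℝ) * v₁))
      (𝓝[>] (0:ℝ)) (𝓝 ((n:ℝ) * v₁)) := by
    have := (h1.mul h2).mul_const ((n:ℝ) * v₁)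
    simpa using this
  refine hF.congr' ?_
  filter_upwards [self_mem_nhdsWithin] with ε hε
  have hεv : 0 < ε / v₁ := div_pos hε hv
  have hA : 0 < Real.arcsin (ε / v₁) := Real.arcsin_pos.2 hεv
  have hAle : Real.arcsin (ε / v₁) ≤ Real.pi / 2 := Real.arcsin_le_pi_div_two _
  have hsin : 0 < Real.sin (Real.arcsin (ε / v₁) / n) := by
    apply Real.sin_pos_of_pos_of_lt_pi (div_pos hA hn')
    calc Real.arcsin (ε / v₁) / n ≤ Real.arcsin (ε / v₁) / 1 := by
          apply div_le_div_of_nonneg_left hA.le one_pos hn1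
      _ ≤ Real.pi / 2 := by simpa using hAle
      _ < Real.pi := by linarith [Real.pi_pos]
  field_simp
end

section
/- Second-variation identity for Hamilton's action in a linear potential: let F be a real inner product space, m > 0, g, x₀, v₀ ∈ F, V₀ ∈ ℝ, and t₁ < t₃ real numbers. Let x(t) = x₀ + t•v₀ − (t²/(2m))•g, so x'(t) = v₀ − (t/m)•g and m·x'' = −g, and let V(y) = V₀ + ⟪g, y⟫. Suppose η : ℝ → F has derivative η'(t) at every t ∈ [t₁, t₃], η' is continuous on [t₁, t₃], and η(t₁) = η(t₃) = 0. Then ∫_{t₁}^{t₃} (m/2·‖x'(t) + η'(t)‖² − V(x(t) + η(t))) dt − ∫_{t₁}^{t₃} (m/2·‖x'(t)‖² − V(x(t))) dt = (m/2)·∫_{t₁}^{t₃} ‖η'(t)‖² dt. -/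
/-!
Expanding `‖x' + η'‖²` and using linearity of the potential, the action difference is
`(m/2) ∫ ‖η'‖²` plus the first variation `∫ (⟪m • x', η'⟫ + ⟪-g, η⟫)`. Since `m • x'' = -g`,
that integrand is the derivative of `⟪m • x', η⟫`, so the first variation vanishes because `η`
vanishes at both endpoints.
-/

open MeasureTheory RealInnerProductSpace Set intervalIntegral

section

variable {F : Type*} [NormedAddCommGroup F] [InnerProductSpace ℝ F]

theorem integral_inner_add_inner_deriv_eq_sub {a b : ℝ} {p p' η η' : ℝ → F}
    (hp : ∀ t ∈ uIcc a b, HasDerivAt p (p' t) t) (hη : ∀ t ∈ uIcc a b, HasDerivAt η (η' t) t)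
    (hint : IntervalIntegrable (fun t => ⟪p t, η' t⟫ + ⟪p' t, η t⟫) volume a b) :
    ∫ t in a..b, (⟪p t, η' t⟫ + ⟪p' t, η t⟫) = ⟪p b, η b⟫ - ⟪p a, η a⟫ :=
  integral_eq_sub_of_hasDerivAt (fun t ht => (hp t ht).inner ℝ (hη t ht)) hint

theorem linearPotential_lagrangian_add_sub (m V₀ : ℝ) (g y v h w : F) :
    (m / 2 * ‖v + w‖ ^ 2 - (V₀ + ⟪g, y + h⟫)) - (m / 2 * ‖v‖ ^ 2 - (V₀ + ⟪g, y⟫)) =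
      m / 2 * ‖w‖ ^ 2 + (⟪m • v, w⟫ + ⟪-g, h⟫) := by
  rw [norm_add_sq_real, inner_add_right, inner_neg_left, real_inner_smul_left]
  ring

theorem linearPotential_action_add_sub {m V₀ a b : ℝ} {g : F} {x x' η η' : ℝ → F}
    (hx : ContinuousOn x (uIcc a b)) (hx' : ContinuousOn x' (uIcc a b))
    (hnewton : ∀ t ∈ uIcc a b, HasDerivAt (fun s => m • x' s) (-g) t)
    (hη : ∀ t ∈ uIcc a b, HasDerivAt η (η' t) t) (hη' : ContinuousOn η' (uIcc a b))
    (hηa : η a = 0) (hηb : η b = 0) :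
    (∫ t in a..b, (m / 2 * ‖x' t + η' t‖ ^ 2 - (V₀ + ⟪g, x t + η t⟫))) -
        (∫ t in a..b, (m / 2 * ‖x' t‖ ^ 2 - (V₀ + ⟪g, x t⟫))) =
      m / 2 * ∫ t in a..b, ‖η' t‖ ^ 2 := by
  have hηc : ContinuousOn η (uIcc a b) := fun t ht => (hη t ht).continuousAt.continuousWithinAt
  have hcross : ∫ t in a..b, (⟪m • x' t, η' t⟫ + ⟪-g, η t⟫) = 0 := by
    rw [integral_inner_add_inner_deriv_eq_sub hnewton hη, hηa, hηb, inner_zero_right,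
      inner_zero_right, sub_zero]
    exact ContinuousOn.intervalIntegrable (by fun_prop)
  rw [← integral_sub (ContinuousOn.intervalIntegrable (by fun_prop))
    (ContinuousOn.intervalIntegrable (by fun_prop))]
  simp_rw [linearPotential_lagrangian_add_sub]
  rw [integral_add (ContinuousOn.intervalIntegrable (by fun_prop))
    (ContinuousOn.intervalIntegrable (by fun_prop)), hcross, add_zero,
    intervalIntegral.integral_const_mul]

end

/-- Second-variation identity for Hamilton's action in a linear potential: for the free
trajectory `x` with velocity `x'` (satisfying `m x'' = -g`) and any variation `η` vanishing
at the endpoints, the difference of Hamilton actions equals `(m/2) ∫ ‖η'‖²`. -/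
theorem hamilton_second_variation_identity {F : Type*} [NormedAddCommGroup F]
    [InnerProductSpace ℝ F]
    (m : ℝ) (hm : 0 < m) (g x₀ v₀ : F) (V₀ : ℝ) (t₁ t₃ : ℝ) (ht : t₁ < t₃)
    (x x' : ℝ → F)
    (hx : ∀ t : ℝ, x t = x₀ + t • v₀ - (t ^ 2 / (2 * m)) • g)
    (hx' : ∀ t : ℝ, x' t = v₀ - (t / m) • g)
    (V : F → ℝ) (hV : ∀ y : F, V y = V₀ + ⟪g, y⟫)
    (η η' : ℝ → F)
    (hη : ∀ t ∈ Set.Icc t₁ t₃, HasDerivAt η (η' t) t)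
    (hη' : ContinuousOn η' (Set.Icc t₁ t₃))
    (hη₁ : η t₁ = 0) (hη₃ : η t₃ = 0) :
    (∫ t in t₁..t₃, (m / 2 * ‖x' t + η' t‖ ^ 2 - V (x t + η t))) -
        (∫ t in t₁..t₃, (m / 2 * ‖x' t‖ ^ 2 - V (x t))) =
      m / 2 * ∫ t in t₁..t₃, ‖η' t‖ ^ 2 := by
  obtain rfl : x = fun t => x₀ + t • v₀ - (t ^ 2 / (2 * m)) • g := funext hx
  obtain rfl : x' = fun t => v₀ - (t / m) • g := funext hx'
  obtain rfl : V = fun y => V₀ + ⟪g, y⟫ := funext hV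
  rw [← uIcc_of_le ht.le] at hη hη'
  have hnewton (t : ℝ) : HasDerivAt (fun s => m • (v₀ - (s / m) • g)) (-g) t := by
    have hmomentum : (fun s => m • (v₀ - (s / m) • g)) = fun s => m • v₀ - s • g := by
      funext s
      rw [smul_sub, smul_smul, mul_div_cancel₀ s hm.ne']
    simpa [hmomentum] using ((hasDerivAt_id t).smul_const g).const_sub (m • v₀)
  exact linearPotential_action_add_sub (by fun_prop) (by fun_prop) (fun t _ => hnewton t)
    hη hη' hη₁ hη₃
end

section
/- Vanishing of the first variation of Hamilton's action along the true trajectory: let F be a real inner product space, m > 0, g, x₀, v₀ ∈ F, and t₁ < t₃ real numbers. Let x'(t) = v₀ − (t/m)•g be the velocity of the free trajectory x(t) = x₀ + t•v₀ − (t²/(2m))•g (so m·x'' = −g). If η : ℝ → F has derivative η'(t) at every t ∈ [t₁, t₃], η' is continuous on [t₁, t₃], and η(t₁) = η(t₃) = 0, then ∫_{t₁}^{t₃} (m·⟪x'(t), η'(t)⟫ − ⟪g, η(t)⟫) dt = 0. -/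
open MeasureTheory RealInnerProductSpace

/-! The integrand is the derivative of `t ↦ ⟪m • x' t, η t⟫`, because the momentum `m • x'` has
derivative `-g` (Newton's law). By the fundamental theorem of calculus the integral is the boundary
term, which vanishes since `η` does at the endpoints. -/

section

variable {F : Type*} [NormedAddCommGroup F] [InnerProductSpace ℝ F]

theorem intervalIntegral.integral_deriv_inner_eq_sub {a b : ℝ} {p p' η η' : ℝ → F}
    (hp : ∀ t ∈ Set.uIcc a b, HasDerivAt p (p' t) t) (hp' : ContinuousOn p' (Set.uIcc a b))
    (hη : ∀ t ∈ Set.uIcc a b, HasDerivAt η (η' t) t) (hη' : ContinuousOn η' (Set.uIcc a b)) :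
    ∫ t in a..b, (⟪p t, η' t⟫ + ⟪p' t, η t⟫) = ⟪p b, η b⟫ - ⟪p a, η a⟫ := by
  have hpc : ContinuousOn p (Set.uIcc a b) := fun t ht => (hp t ht).continuousAt.continuousWithinAt
  have hηc : ContinuousOn η (Set.uIcc a b) := fun t ht => (hη t ht).continuousAt.continuousWithinAt
  apply intervalIntegral.integral_eq_sub_of_hasDerivAt
  · exact fun t ht => by simpa only [add_comm] using (hp t ht).inner ℝ (hη t ht)
  · exact ((hpc.inner hη').add (hp'.inner hηc)).intervalIntegrable

theorem hasDerivAt_smul_free_fall_velocity {m : ℝ} (hm : m ≠ 0) (g v₀ : F) (t : ℝ) :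
    HasDerivAt (fun t : ℝ => m • (v₀ - (t / m) • g)) (-g) t := by
  have hv : HasDerivAt (fun t : ℝ => v₀ - (t / m) • g) (-(m⁻¹ • g)) t := by
    simpa using ((hasDerivAt_id t).div_const m).smul_const g |>.const_sub v₀
  exact (hv.const_smul m).congr_deriv (by rw [smul_neg, smul_smul, mul_inv_cancel₀ hm, one_smul])

end

theorem hamilton_first_variation_vanishes_general {F : Type*} [NormedAddCommGroup F]
    [InnerProductSpace ℝ F]
    (m : ℝ) (hm : 0 < m) (g v₀ : F) (t₁ t₃ : ℝ) (ht : t₁ < t₃)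
    (x' : ℝ → F)
    (hx' : ∀ t : ℝ, x' t = v₀ - (t / m) • g)
    (η η' : ℝ → F)
    (hη : ∀ t ∈ Set.Icc t₁ t₃, HasDerivAt η (η' t) t)
    (hη' : ContinuousOn η' (Set.Icc t₁ t₃))
    (hη₁ : η t₁ = 0) (hη₃ : η t₃ = 0) :
    (∫ t in t₁..t₃, (m * ⟪x' t, η' t⟫ - ⟪g, η t⟫)) = 0 := by
  have hI : Set.uIcc t₁ t₃ = Set.Icc t₁ t₃ := Set.uIcc_of_le ht.le
  have hp : ∀ t ∈ Set.uIcc t₁ t₃, HasDerivAt (fun t => m • x' t) (-g) t := fun t _ => by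
    simpa only [hx'] using hasDerivAt_smul_free_fall_velocity hm.ne' g v₀ t
  have hbp := intervalIntegral.integral_deriv_inner_eq_sub hp continuousOn_const
    (hI ▸ hη) (hI ▸ hη')
  simp only [real_inner_smul_left, inner_neg_left, ← sub_eq_add_neg, hη₁, hη₃,
    inner_zero_right, sub_zero] at hbp
  exact hbp

/-- Vanishing of the first variation of Hamilton's action along the true trajectory:
`∫ (m ⟪x', η'⟫ - ⟪g, η⟫) dt = 0` for any variation `η` vanishing at the endpoints. -/
theorem hamilton_first_variation_vanishes {F : Type*} [NormedAddCommGroup F]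
    [InnerProductSpace ℝ F]
    (m : ℝ) (hm : 0 < m) (g x₀ v₀ : F) (t₁ t₃ : ℝ) (ht : t₁ < t₃)
    (x x' : ℝ → F)
    (hx : ∀ t : ℝ, x t = x₀ + t • v₀ - (t ^ 2 / (2 * m)) • g)
    (hx' : ∀ t : ℝ, x' t = v₀ - (t / m) • g)
    (η η' : ℝ → F)
    (hη : ∀ t ∈ Set.Icc t₁ t₃, HasDerivAt η (η' t) t)
    (hη' : ContinuousOn η' (Set.Icc t₁ t₃))
    (hη₁ : η t₁ = 0) (hη₃ : η t₃ = 0) :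
    (∫ t in t₁..t₃, (m * ⟪x' t, η' t⟫ - ⟪g, η t⟫)) = 0 :=
  hamilton_first_variation_vanishes_general m hm g v₀ t₁ t₃ ht x' hx' η η' hη hη' hη₁ hη₃
end

section
/- Hamilton's quantity of action for the 'three-step' steered variation (Theorem on positive definiteness, exact value): let F be a real inner product space, m > 0, g, x₀, v₀, δ ∈ F, V₀ ∈ ℝ, and 0 < T₂ < T₃ real numbers. Let x(t) = x₀ + t•v₀ − (t²/(2m))•g, x'(t) = v₀ − (t/m)•g, and V(y) = V₀ + ⟪g, y⟫. Then ∫_0^{T₂} (m/2·‖x'(t) + (1/T₂)•δ‖² − V(x(t) + (t/T₂)•δ)) dt + ∫_{T₂}^{T₃} (m/2·‖x'(t) − (1/(T₃−T₂))•δ‖² − V(x(t) + ((T₃−t)/(T₃−T₂))•δ)) dt − ∫_0^{T₃} (m/2·‖x'(t)‖² − V(x(t))) dt = (m/2)·‖δ‖²·(1/T₂ + 1/(T₃−T₂)); in particular this variation of Hamilton's action is strictly positive whenever δ ≠ 0. -/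
open MeasureTheory RealInnerProductSpace

lemma poly_int (a b A B C : ℝ) :
    (∫ t in a..b, (A + B * t + C * t ^ 2)) =
      A * (b - a) + B / 2 * (b ^ 2 - a ^ 2) + C / 3 * (b ^ 3 - a ^ 3) := by
  have h : ∀ t ∈ Set.uIcc a b,
      HasDerivAt (fun t : ℝ => A * t + B / 2 * t ^ 2 + C / 3 * t ^ 3)
        (A + B * t + C * t ^ 2) t := by
    intro t _
    have h1 : HasDerivAt (fun t : ℝ => A * t + B / 2 * t ^ 2 + C / 3 * t ^ 3)
        (A * 1 + B / 2 * (2 * t ^ 1) + C / 3 * (3 * t ^ 2)) t :=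
      (((hasDerivAt_id t).const_mul A).add
        ((hasDerivAt_pow 2 t).const_mul (B / 2))).add
        ((hasDerivAt_pow 3 t).const_mul (C / 3))
    convert h1 using 1; ring
  rw [intervalIntegral.integral_eq_sub_of_hasDerivAt h
    (Continuous.intervalIntegrable (by continuity) a b)]
  ring

set_option maxHeartbeats 1600000 in
/-- Hamilton's quantity of action for the 'three-step' steered variation: the variation of
Hamilton's action caused by a temporary displacement `δ` of the intermediate configuration
at time `T₂` (with fixed endpoints at times `0` and `T₃`) equals
`(m/2)·‖δ‖²·(1/T₂ + 1/(T₃ - T₂))`; in particular it is strictly positive for `δ ≠ 0`. -/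
theorem hamilton_three_step_variation {F : Type*} [NormedAddCommGroup F]
    [InnerProductSpace ℝ F]
    (m : ℝ) (hm : 0 < m) (g x₀ v₀ δ : F) (V₀ : ℝ)
    (T₂ T₃ : ℝ) (hT₂ : 0 < T₂) (hT : T₂ < T₃)
    (x x' : ℝ → F)
    (hx : ∀ t : ℝ, x t = x₀ + t • v₀ - (t ^ 2 / (2 * m)) • g)
    (hx' : ∀ t : ℝ, x' t = v₀ - (t / m) • g)
    (V : F → ℝ) (hV : ∀ y : F, V y = V₀ + ⟪g, y⟫) :
    ((∫ t in (0:ℝ)..T₂, (m / 2 * ‖x' t + (1 / T₂) • δ‖ ^ 2 - V (x t + (t / T₂) • δ))) +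
          (∫ t in T₂..T₃, (m / 2 * ‖x' t - (1 / (T₃ - T₂)) • δ‖ ^ 2 -
            V (x t + ((T₃ - t) / (T₃ - T₂)) • δ))) -
          (∫ t in (0:ℝ)..T₃, (m / 2 * ‖x' t‖ ^ 2 - V (x t))) =
        m / 2 * ‖δ‖ ^ 2 * (1 / T₂ + 1 / (T₃ - T₂))) ∧
      (δ ≠ 0 →
        0 < (∫ t in (0:ℝ)..T₂, (m / 2 * ‖x' t + (1 / T₂) • δ‖ ^ 2 - V (x t + (t / T₂) • δ))) +
            (∫ t in T₂..T₃, (m / 2 * ‖x' t - (1 / (T₃ - T₂)) • δ‖ ^ 2 -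
              V (x t + ((T₃ - t) / (T₃ - T₂)) • δ))) -
            (∫ t in (0:ℝ)..T₃, (m / 2 * ‖x' t‖ ^ 2 - V (x t)))) := by
  have hs : (0:ℝ) < T₃ - T₂ := by linarith
  have hm' : m ≠ 0 := hm.ne'
  have hT₂' : T₂ ≠ 0 := hT₂.ne'
  have hs' : T₃ - T₂ ≠ 0 := hs.ne'
  have key :
      (∫ t in (0:ℝ)..T₂, (m / 2 * ‖x' t + (1 / T₂) • δ‖ ^ 2 - V (x t + (t / T₂) • δ))) +
          (∫ t in T₂..T₃, (m / 2 * ‖x' t - (1 / (T₃ - T₂)) • δ‖ ^ 2 -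
            V (x t + ((T₃ - t) / (T₃ - T₂)) • δ))) -
          (∫ t in (0:ℝ)..T₃, (m / 2 * ‖x' t‖ ^ 2 - V (x t))) =
        m / 2 * ‖δ‖ ^ 2 * (1 / T₂ + 1 / (T₃ - T₂)) := by
    have e1 : (∫ t in (0:ℝ)..T₂,
          (m / 2 * ‖x' t + (1 / T₂) • δ‖ ^ 2 - V (x t + (t / T₂) • δ))) =
        ∫ t in (0:ℝ)..T₂,
          ((m / 2 * ⟪v₀, v₀⟫ + m / T₂ * ⟪v₀, δ⟫ + m / (2 * T₂ ^ 2) * ⟪δ, δ⟫ - V₀ - ⟪g, x₀⟫)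
            + (-2 * ⟪g, v₀⟫ - 2 / T₂ * ⟪g, δ⟫) * t + (⟪g, g⟫ / m) * t ^ 2) := by
      refine intervalIntegral.integral_congr fun t _ => ?_
      simp only [hx, hx', hV, ← real_inner_self_eq_norm_sq, inner_add_left, inner_add_right,
        inner_sub_left, inner_sub_right, real_inner_smul_left, real_inner_smul_right,
        real_inner_comm]
      field_simp
      ring
    have e2 : (∫ t in T₂..T₃,
          (m / 2 * ‖x' t - (1 / (T₃ - T₂)) • δ‖ ^ 2 -
            V (x t + ((T₃ - t) / (T₃ - T₂)) • δ))) =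
        ∫ t in T₂..T₃,
          ((m / 2 * ⟪v₀, v₀⟫ - m / (T₃ - T₂) * ⟪v₀, δ⟫ + m / (2 * (T₃ - T₂) ^ 2) * ⟪δ, δ⟫
              - V₀ - ⟪g, x₀⟫ - T₃ / (T₃ - T₂) * ⟪g, δ⟫)
            + (-2 * ⟪g, v₀⟫ + 2 / (T₃ - T₂) * ⟪g, δ⟫) * t + (⟪g, g⟫ / m) * t ^ 2) := by
      refine intervalIntegral.integral_congr fun t _ => ?_
      simp only [hx, hx', hV, ← real_inner_self_eq_norm_sq, inner_add_left, inner_add_right,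
        inner_sub_left, inner_sub_right, real_inner_smul_left, real_inner_smul_right,
        real_inner_comm]
      field_simp
      ring
    have e3 : (∫ t in (0:ℝ)..T₃, (m / 2 * ‖x' t‖ ^ 2 - V (x t))) =
        ∫ t in (0:ℝ)..T₃,
          ((m / 2 * ⟪v₀, v₀⟫ - V₀ - ⟪g, x₀⟫)
            + (-2 * ⟪g, v₀⟫) * t + (⟪g, g⟫ / m) * t ^ 2) := by
      refine intervalIntegral.integral_congr fun t _ => ?_
      simp only [hx, hx', hV, ← real_inner_self_eq_norm_sq, inner_add_left, inner_add_right,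
        inner_sub_left, inner_sub_right, real_inner_smul_left, real_inner_smul_right,
        real_inner_comm]
      field_simp
      ring
    rw [e1, e2, e3, poly_int, poly_int, poly_int,
      show ‖δ‖ ^ 2 = ⟪δ, δ⟫ from (real_inner_self_eq_norm_sq δ).symm]
    field_simp
    ring
  refine ⟨key, fun hδ => ?_⟩
  rw [key]
  have h1 : 0 < ‖δ‖ := norm_pos_iff.mpr hδ
  have h2 : 0 < 1 / T₂ + 1 / (T₃ - T₂) := by
    have := one_div_pos.mpr hT₂
    have := one_div_pos.mpr hs
    linarith
  have h3 : 0 < m / 2 * ‖δ‖ ^ 2 := by positivity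
  exact mul_pos h3 h2
end
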